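/- Piecewise-linear representation of POMDP value functions: if V_{k+1}(π) = min_{β ∈ B} π·β for a finite set B of vectors, then V_k(π) = min_{a∈U} { π·c(a) + α Σ_θ min_{β∈B} σ̃_θ(π,a)·β } is also of the form min over a finite set of vectors of linear functions of π; explicitly, V_k(π) = min over a ∈ U and functions φ : Y → B of π · ( c(a) + α Σ_θ M^{a,θ} φ(θ) ), where M^{a,θ} is the matrix with (i,j) entry p_{ij}^a r_{jθ}^a. -/
import Mathlib

/-- Sum over θ of minima equals minimum over selections φ. -/
lemma sum_inf'_eq_inf'_pi {Y : Type*} [Fintype Y] [DecidableEq Y]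
    {β : Type*} [DecidableEq β] (B : Finset β) (hB : B.Nonempty)
    (g : Y → β → ℝ) :
    (∑ θ : Y, B.inf' hB (g θ)) =
      (Fintype.piFinset fun _ : Y => B).inf'
        (Fintype.piFinset_nonempty.mpr fun _ => hB)
        (fun φ => ∑ θ : Y, g θ (φ θ)) := by
  apply le_antisymm
  · apply Finset.le_inf'
    intro φ hφ
    apply Finset.sum_le_sum
    intro θ _
    exact Finset.inf'_le _ (Fintype.mem_piFinset.mp hφ θ)
  · choose φ hφmem hφeq using fun θ => Finset.exists_mem_eq_inf' hB (g θ)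
    calc (Fintype.piFinset fun _ : Y => B).inf'
          (Fintype.piFinset_nonempty.mpr fun _ => hB)
          (fun ψ => ∑ θ : Y, g θ (ψ θ))
        ≤ ∑ θ : Y, g θ (φ θ) :=
          Finset.inf'_le _ (Fintype.mem_piFinset.mpr hφmem)
      _ = ∑ θ : Y, B.inf' hB (g θ) := by
          exact Finset.sum_congr rfl fun θ _ => (hφeq θ).symm

/-- Monotone affine maps commute with `inf'`. -/
lemma affine_inf' {ι : Type*} (s : Finset ι) (hs : s.Nonempty)
    (C α : ℝ) (hα : 0 ≤ α) (f : ι → ℝ) :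
    C + α * s.inf' hs f = s.inf' hs (fun i => C + α * f i) := by
  apply le_antisymm
  · apply Finset.le_inf'
    intro i hi
    have := Finset.inf'_le f hi
    nlinarith
  · obtain ⟨i, hi, hieq⟩ := Finset.exists_mem_eq_inf' hs f
    rw [hieq]
    exact Finset.inf'_le _ hi

/-- Piecewise-linear (min of linear functions) representation is preserved by
one step of POMDP value iteration. -/
theorem value_iteration_piecewise_linear {n : ℕ} {U Y : Type*}
    [Fintype U] [Fintype Y] [Nonempty U] [DecidableEq Y] [DecidableEq (Fin n → ℝ)]
    (α : ℝ) (hα : 0 ≤ α)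
    (c : U → Fin n → ℝ)
    (p : U → Fin n → Fin n → ℝ) (hp_nonneg : ∀ a i j, 0 ≤ p a i j)
    (r : U → Fin n → Y → ℝ) (hr_nonneg : ∀ a j θ, 0 ≤ r a j θ)
    (B : Finset (Fin n → ℝ)) (hB : B.Nonempty) :
    ∀ π : Fin n → ℝ, (∀ i, 0 ≤ π i) →
      (Finset.univ.inf' Finset.univ_nonempty fun a : U =>
        (∑ i, π i * c a i) +
          α * ∑ θ : Y, B.inf' hB fun β =>
            ∑ j, (∑ i, π i * p a i j * r a j θ) * β j) =
      (Finset.univ.inf' Finset.univ_nonempty fun a : U =>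
        (Fintype.piFinset fun _ : Y => B).inf'
          (Fintype.piFinset_nonempty.mpr fun _ => hB) fun φ =>
          ∑ i, π i * (c a i +
            α * ∑ θ : Y, ∑ j, p a i j * r a j θ * φ θ j)) := by
  intro π hπ
  apply Finset.inf'_congr _ rfl
  intro a _
  rw [sum_inf'_eq_inf'_pi B hB
    (fun θ β => ∑ j, (∑ i, π i * p a i j * r a j θ) * β j)]
  rw [affine_inf' _ _ _ _ hα]
  apply Finset.inf'_congr _ rfl
  intro φ _
  simp only [mul_add, Finset.sum_add_distrib]
  congr 1
  calc α * ∑ θ : Y, ∑ j, (∑ i, π i * p a i j * r a j θ) * φ θ j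
      = ∑ θ : Y, ∑ j, ∑ i, α * (π i * p a i j * r a j θ * φ θ j) := by
        rw [Finset.mul_sum]
        refine Finset.sum_congr rfl fun θ _ => ?_
        rw [Finset.mul_sum]
        refine Finset.sum_congr rfl fun j _ => ?_
        rw [Finset.sum_mul, Finset.mul_sum]
    _ = ∑ θ : Y, ∑ i, ∑ j, α * (π i * p a i j * r a j θ * φ θ j) :=
        Finset.sum_congr rfl fun θ _ => Finset.sum_comm
    _ = ∑ i, ∑ θ : Y, ∑ j, α * (π i * p a i j * r a j θ * φ θ j) :=
        Finset.sum_comm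
    _ = ∑ i, π i * (α * ∑ θ : Y, ∑ j, p a i j * r a j θ * φ θ j) := by
        refine Finset.sum_congr rfl fun i _ => ?_
        rw [Finset.mul_sum, Finset.mul_sum]
        refine Finset.sum_congr rfl fun θ _ => ?_
        rw [Finset.mul_sum, Finset.mul_sum]
        exact Finset.sum_congr rfl fun j _ => by ring
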